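/- For every graph H on k vertices and every integer n > k, (n − k)·I(H,n) ≤ n·I(H, n−1); equivalently, I(H,n)/C(n,k) ≤ I(H,n−1)/C(n−1,k), so the sequence n ↦ I(H,n)/C(n,k) is nonincreasing for n ≥ k. -/

import Mathlib

open SimpleGraph

/-- Number of vertex subsets of `G` whose induced subgraph is isomorphic to `H`. -/
noncomputable def inducedCount {α β : Type*} [Fintype α] [Fintype β]
    (H : SimpleGraph α) (G : SimpleGraph β) : ℕ :=
  Set.ncard {S : Finset β | Nonempty (H ≃g (G.induce (S : Set β)))}

/-- Maximum of `inducedCount H G` over all graphs `G` on `n` vertices. -/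
noncomputable def maxCount {α : Type*} [Fintype α] (H : SimpleGraph α) (n : ℕ) : ℕ :=
  sSup {m | ∃ G : SimpleGraph (Fin n), inducedCount H G = m}

/-- The net graph: a triangle on `{3,4,5}` with pendant vertices `0,1,2`
attached to `3,4,5` respectively (0-indexed version of vertices 1..6). -/
def netGraph : SimpleGraph (Fin 6) :=
  SimpleGraph.fromRel (fun a b =>
    (a = 3 ∧ b = 4) ∨ (a = 4 ∧ b = 5) ∨ (a = 3 ∧ b = 5) ∨
    (a = 0 ∧ b = 3) ∨ (a = 1 ∧ b = 4) ∨ (a = 2 ∧ b = 5))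

/-- `N(n)`: the maximum number of induced copies of the net among graphs on `n` vertices. -/
noncomputable def netMax (n : ℕ) : ℕ := maxCount netGraph n

/-! Averaging over deleted vertices: a copy of `H` in a graph `G` on `n` vertices avoids exactly
`n - k` vertices, and the copies avoiding `v` are the copies in `G - v`, a graph on `n - 1`
vertices. Summing over `v` gives `(n - k) I(H, G) ≤ n I(H, n - 1)`; the density form is the same
inequality divided by `(n - k) C(n, k) = n C(n - 1, k)`. -/

open Finset

noncomputable def SimpleGraph.Embedding.induceImageIso {β γ : Type*} {G₁ : SimpleGraph β}
    {G₂ : SimpleGraph γ} (e : G₁ ↪g G₂) (s : Set β) : G₁.induce s ≃g G₂.induce (e '' s) where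
  toEquiv := Equiv.Set.image e s e.injective
  map_rel_iff' := by simp [Equiv.Set.image, Equiv.Set.imageOfInjOn]

section InducedCopies

open scoped Classical

variable {α β γ : Type*} (H : SimpleGraph α)

lemma nonempty_iso_induce_image_iff {G₁ : SimpleGraph β} {G₂ : SimpleGraph γ} (e : G₁ ↪g G₂)
    (s : Set β) : Nonempty (H ≃g G₂.induce (e '' s)) ↔ Nonempty (H ≃g G₁.induce s) :=
  ⟨fun ⟨φ⟩ ↦ ⟨φ.trans (e.induceImageIso s).symm⟩, fun ⟨φ⟩ ↦ ⟨φ.trans (e.induceImageIso s)⟩⟩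

noncomputable def inducedCopies [Fintype β] (G : SimpleGraph β) : Finset (Finset β) :=
  {S | Nonempty (H ≃g G.induce S)}

variable {H} [Fintype β] [Fintype γ]

@[simp]
lemma mem_inducedCopies {G : SimpleGraph β} {S : Finset β} :
    S ∈ inducedCopies H G ↔ Nonempty (H ≃g G.induce S) := by
  simp [inducedCopies]

variable (H)

lemma inducedCount_eq_card_inducedCopies [Fintype α] (G : SimpleGraph β) :
    inducedCount H G = #(inducedCopies H G) := by
  rw [inducedCount, ← Set.ncard_coe_finset]
  congr 1
  ext S
  simp

lemma card_eq_of_mem_inducedCopies [Fintype α] {G : SimpleGraph β} {S : Finset β}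
    (hS : S ∈ inducedCopies H G) : #S = Fintype.card α := by
  obtain ⟨φ⟩ := mem_inducedCopies.mp hS
  simpa using (Fintype.card_congr φ.toEquiv).symm

lemma map_inducedCopies {G₁ : SimpleGraph β} {G₂ : SimpleGraph γ} (e : G₁ ↪g G₂) :
    (inducedCopies H G₁).map (mapEmbedding e.toEmbedding).toEmbedding =
      {S ∈ inducedCopies H G₂ | ↑S ⊆ Set.range e} := by
  ext T
  simp only [mem_map, mem_filter, mem_inducedCopies, RelEmbedding.coe_toEmbedding,
    mapEmbedding_apply]
  constructor
  · rintro ⟨S, hS, rfl⟩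
    refine ⟨?_, ?_⟩
    · rwa [coe_map, RelEmbedding.coe_toEmbedding, nonempty_iso_induce_image_iff]
    · simp
  · rintro ⟨hT, hTe⟩
    obtain ⟨S, -, rfl⟩ := (subset_map_iff (f := e.toEmbedding) (s := T) (t := univ)).mp
      fun x hx ↦ by simpa using hTe hx
    rw [coe_map, RelEmbedding.coe_toEmbedding, nonempty_iso_induce_image_iff] at hT
    exact ⟨S, hT, rfl⟩

variable [Fintype α]

lemma inducedCount_eq_card_filter_subset_range {G₁ : SimpleGraph β} {G₂ : SimpleGraph γ}
    (e : G₁ ↪g G₂) :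
    inducedCount H G₁ = #{S ∈ inducedCopies H G₂ | ↑S ⊆ Set.range e} := by
  rw [inducedCount_eq_card_inducedCopies, ← map_inducedCopies, card_map]

lemma inducedCount_congr {G₁ : SimpleGraph β} {G₂ : SimpleGraph γ} (φ : G₁ ≃g G₂) :
    inducedCount H G₁ = inducedCount H G₂ := by
  rw [inducedCount_eq_card_filter_subset_range H φ.toEmbedding,
    inducedCount_eq_card_inducedCopies]
  congr 1
  exact filter_true_of_mem fun S _ ↦ by simp [φ.surjective.range_eq]

lemma inducedCount_induce (G : SimpleGraph β) (s : Set β) [Fintype s] :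
    inducedCount H (G.induce s) = #{S ∈ inducedCopies H G | ↑S ⊆ s} := by
  have hrange : Set.range (Embedding.induce (G := G) s) = s := Subtype.range_coe
  simp_rw [inducedCount_eq_card_filter_subset_range H (Embedding.induce s), hrange]

end InducedCopies

section MaxCount

variable {α β : Type*} [Fintype α] (H : SimpleGraph α)

lemma bddAbove_inducedCount_fin (n : ℕ) :
    BddAbove {m | ∃ G : SimpleGraph (Fin n), inducedCount H G = m} :=
  (Set.finite_range fun G : SimpleGraph (Fin n) ↦ inducedCount H G).bddAbove

lemma exists_inducedCount_eq_maxCount (n : ℕ) :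
    ∃ G : SimpleGraph (Fin n), inducedCount H G = maxCount H n :=
  Nat.sSup_mem (s := {m | ∃ G : SimpleGraph (Fin n), inducedCount H G = m}) ⟨_, ⊥, rfl⟩
    (bddAbove_inducedCount_fin H n)

lemma inducedCount_le_maxCount [Fintype β] (G : SimpleGraph β) :
    inducedCount H G ≤ maxCount H (Fintype.card β) := by
  rw [inducedCount_congr H (Iso.map (Fintype.equivFin β) G)]
  exact le_csSup (bddAbove_inducedCount_fin H _) ⟨_, rfl⟩

end MaxCount

section DoubleCounting

open scoped Classical

variable {α β : Type*} [Fintype α] [Fintype β] (H : SimpleGraph α)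

lemma sum_card_filter_notMem_inducedCopies (G : SimpleGraph β) :
    ∑ v, #{S ∈ inducedCopies H G | v ∉ S} =
      (Fintype.card β - Fintype.card α) * inducedCount H G := by
  rw [inducedCount_eq_card_inducedCopies, mul_comm]
  refine (sum_card_bipartiteAbove_eq_sum_card_bipartiteBelow (r := fun v S ↦ v ∉ S)).trans
    (sum_const_nat fun S hS ↦ ?_)
  rw [bipartiteBelow, filter_notMem_eq_sdiff, ← compl_eq_univ_sdiff, card_compl,
    card_eq_of_mem_inducedCopies H hS]

lemma card_sub_mul_inducedCount_le (G : SimpleGraph β) :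
    (Fintype.card β - Fintype.card α) * inducedCount H G ≤
      Fintype.card β * maxCount H (Fintype.card β - 1) := by
  calc (Fintype.card β - Fintype.card α) * inducedCount H G
      = ∑ v, inducedCount H (G.induce {v}ᶜ) := by
        refine (sum_card_filter_notMem_inducedCopies H G).symm.trans (sum_congr rfl fun v _ ↦ ?_)
        rw [inducedCount_induce]
        exact congrArg card (filter_congr fun S _ ↦ by simp)
    _ ≤ ∑ _v : β, maxCount H (Fintype.card β - 1) := sum_le_sum fun v _ ↦ by
        simpa [filter_ne', card_univ] using inducedCount_le_maxCount H (G.induce {v}ᶜ)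
    _ = Fintype.card β * maxCount H (Fintype.card β - 1) := by simp

end DoubleCounting

lemma sub_mul_maxCount_le {α : Type*} [Fintype α] (H : SimpleGraph α) (n : ℕ) :
    (n - Fintype.card α) * maxCount H n ≤ n * maxCount H (n - 1) := by
  obtain ⟨G, hG⟩ := exists_inducedCount_eq_maxCount H n
  simpa [hG] using card_sub_mul_inducedCount_le H G

lemma div_choose_le_div_choose_pred {k n a b : ℕ} (hkn : k < n) (h : (n - k) * a ≤ n * b) :
    (a : ℝ) / n.choose k ≤ b / (n - 1).choose k := by
  obtain ⟨m, rfl⟩ : ∃ m, n = m + 1 := ⟨n - 1, by omega⟩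
  have hk : k ≤ m := Nat.le_of_lt_succ hkn
  rw [Nat.add_sub_cancel, div_le_div_iff₀ (by exact_mod_cast Nat.choose_pos hkn.le)
    (by exact_mod_cast Nat.choose_pos hk)]
  have hcancel : (m + 1 - k) * (a * m.choose k) ≤ (m + 1 - k) * (b * (m + 1).choose k) :=
    calc (m + 1 - k) * (a * m.choose k) = m.choose k * ((m + 1 - k) * a) := by ring
      _ ≤ m.choose k * ((m + 1) * b) := Nat.mul_le_mul_left _ h
      _ = b * (m.choose k * (m + 1)) := by ring
      _ = (m + 1 - k) * (b * (m + 1).choose k) := by rw [Nat.choose_mul_succ_eq]; ring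
  exact_mod_cast Nat.le_of_mul_le_mul_left hcancel (by omega)

theorem maxCount_density_monotone
    (k : ℕ) (H : SimpleGraph (Fin k)) (n : ℕ) (hn : k < n) :
    (n - k) * maxCount H n ≤ n * maxCount H (n - 1) ∧
    (maxCount H n : ℝ) / (n.choose k : ℝ) ≤
      (maxCount H (n - 1) : ℝ) / ((n - 1).choose k : ℝ) := by
  have h := sub_mul_maxCount_le H n
  rw [Fintype.card_fin] at h
  exact ⟨h, div_choose_le_div_choose_pred hn h⟩
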